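/- Let M be a submodule of ℝ⟦x₁,…,xₙ⟧ᵖ and let r ∈ ℕ. Let Δ denote the complement of the diagram of initial exponents 𝒩(M) in ℕⁿ×{1,…,p}. Then the set {x^{(β,i)} : (β,i) ∈ Δ, |β| ≤ r} is a basis of an ℝ-linear complement of M + (x)^{r+1}ℝ⟦x⟧ᵖ in ℝ⟦x⟧ᵖ, where (x) denotes the maximal ideal of ℝ⟦x⟧ generated by x₁,…,xₙ. -/

import Mathlib

open Classical

/-- Index set `ℕⁿ × {1,…,p}` for coefficients of elements of `A⟦x₁,…,xₙ⟧ᵖ`. -/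
abbrev Idx (n p : ℕ) := (Fin n →₀ ℕ) × Fin p

/-- Total degree `|α|` of a multiindex. -/
def degF {n : ℕ} (α : Fin n →₀ ℕ) : ℕ := ∑ i, α i

/-- Lexicographic order on multiindices. -/
def lexLT {n : ℕ} (α β : Fin n →₀ ℕ) : Prop :=
  ∃ i : Fin n, (∀ j, j < i → α j = β j) ∧ α i < β i

/-- The total order on `ℕⁿ × {1,…,p}` comparing `(|α|, j, α)` lexicographically. -/
def idxLT {n p : ℕ} (a b : Idx n p) : Prop :=
  degF a.1 < degF b.1 ∨
    (degF a.1 = degF b.1 ∧ ((a.2 : ℕ) < (b.2 : ℕ) ∨ (a.2 = b.2 ∧ lexLT a.1 b.1)))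

def idxLE {n p : ℕ} (a b : Idx n p) : Prop := idxLT a b ∨ a = b

/-- Support of `F ∈ A⟦x⟧ᵖ`. -/
def suppV {n p : ℕ} {A : Type} [Semiring A] (F : Fin p → MvPowerSeries (Fin n) A) :
    Set (Idx n p) :=
  {d | MvPowerSeries.coeff (R := A) d.1 (F d.2) ≠ 0}

/-- `d` is the initial exponent `exp F` of `F`. -/
def IsExpOf {n p : ℕ} {A : Type} [Semiring A] (F : Fin p → MvPowerSeries (Fin n) A)
    (d : Idx n p) : Prop :=
  d ∈ suppV F ∧ ∀ d' ∈ suppV F, idxLE d d'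

/-- `S + ℕⁿ`, for `S ⊆ ℕⁿ × {1,…,p}`. -/
def setShift {n p : ℕ} (S : Set (Idx n p)) : Set (Idx n p) :=
  {d | ∃ s ∈ S, ∃ β : Fin n →₀ ℕ, d = (s.1 + β, s.2)}

/-- The diagram of initial exponents `𝒩(M) = {exp F : F ∈ M ∖ {0}}` of a submodule `M`
of `A⟦x⟧ᵖ`. -/
def diagramOf {n p : ℕ} {A : Type} [CommRing A]
    (M : Submodule (MvPowerSeries (Fin n) A) (Fin p → MvPowerSeries (Fin n) A)) :
    Set (Idx n p) :=
  {d | ∃ F ∈ M, F ≠ 0 ∧ IsExpOf F d}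

/-- `d` is a vertex of the diagram `𝒩`: `(𝒩 ∖ {d}) + ℕⁿ ≠ 𝒩`. -/
def IsVertex {n p : ℕ} (𝒩 : Set (Idx n p)) (d : Idx n p) : Prop :=
  setShift (𝒩 \ {d}) ≠ 𝒩

/-- `(α_i, j_i) + ℕⁿ`. -/
def DeltaFull {n p q : ℕ} (e : Fin q → Idx n p) (i : Fin q) : Set (Idx n p) :=
  {d | d.2 = (e i).2 ∧ ∃ β : Fin n →₀ ℕ, d.1 = (e i).1 + β}

/-- The sets `Δ_i` of Hironaka's division: `Δ_i = ((α_i,j_i) + ℕⁿ) ∖ (Δ_1 ∪ ⋯ ∪ Δ_{i−1})`. -/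
def Delta {n p q : ℕ} (e : Fin q → Idx n p) (i : Fin q) : Set (Idx n p) :=
  DeltaFull e i \ ⋃ (k : Fin q) (hk : k < i), Delta e k
termination_by i.val
decreasing_by exact hk

/-- The complementary region `Δ = ℕⁿ×{1,…,p} ∖ (Δ_1 ∪ ⋯ ∪ Δ_q)`. -/
def DeltaC {n p q : ℕ} (e : Fin q → Idx n p) : Set (Idx n p) :=
  (⋃ i : Fin q, Delta e i)ᶜ

/-!
A series lies in `(x)^{r+1}ℝ⟦x⟧ᵖ` exactly when its coefficients of degree `≤ r` vanish; the
inclusion `⊇` comes from Euler's identity `∑ᵢ xᵢ ∂ᵢ f = k f` for `f` homogeneous of degree `k`.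

Disjointness: a nonzero `G` in the span of the monomials `x^{(β,i)}`, `(β,i) ∈ Δ`, `|β| ≤ r`,
lying in `M + (x)^{r+1}ℝ⟦x⟧ᵖ` agrees in degrees `≤ r` with some `F ∈ M`. Then `exp F` has
degree `≤ r`, so it is in the support of `G`, hence in `Δ`; but it lies in `𝒩(M)`.

Spanning is Hironaka's division truncated at degree `r`: if a monomial of degree `≤ r` were
missing from the sum, take the largest missing one for the total order; it lies in `𝒩(M)`, so
it is `exp F` for some `F ∈ M`, and `F` minus its initial term only involves larger monomials of
degree `≤ r` and a tail in `(x)^{r+1}ℝ⟦x⟧ᵖ`.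
-/

namespace MvPowerSeries

open Finsupp

variable {σ R K : Type*}

theorem le_order_of_mem_span_X_pow [CommSemiring R] {f : MvPowerSeries σ R} {s : ℕ}
    (hf : f ∈ Ideal.span (Set.range X) ^ s) : (s : ℕ∞) ≤ f.order := by
  induction s generalizing f with
  | zero => exact bot_le
  | succ s ih =>
    have hX : Ideal.span (Set.range X) ≤ RingHom.ker (constantCoeff (σ := σ) (R := R)) :=
      Ideal.span_le.mpr (by rintro _ ⟨i, rfl⟩; exact constantCoeff_X i)
    rw [pow_succ] at hf
    refine Submodule.mul_induction_on hf (fun a ha b hb => ?_) (fun a b ha hb => ?_)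
    · calc ((s + 1 : ℕ) : ℕ∞) = s + 1 := by push_cast; rfl
        _ ≤ a.order + b.order :=
          add_le_add (ih ha) (one_le_order_iff_constCoeff_eq_zero.mpr (hX hb))
        _ ≤ (a * b).order := le_order_mul
    · exact (le_min ha hb).trans min_order_le_add

section Euler

variable [Field K]

/-- `∂ᵢ f` with its coefficients of degree `k` divided by `k + 1`. -/
noncomputable def eulerQuot (i : σ) (f : MvPowerSeries σ K) : MvPowerSeries σ K :=
  fun β => ((β i + 1 : K) / (β.degree + 1)) * coeff (β + single i 1) f

theorem coeff_eulerQuot (i : σ) (f : MvPowerSeries σ K) (β : σ →₀ ℕ) :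
    coeff β (eulerQuot i f) = ((β i + 1 : K) / (β.degree + 1)) * coeff (β + single i 1) f :=
  rfl

theorem coeff_X_mul_eulerQuot (i : σ) (f : MvPowerSeries σ K) (α : σ →₀ ℕ) :
    coeff α (X i * eulerQuot i f) = (α i / α.degree : K) * coeff α f := by
  classical
  rw [X_def, coeff_monomial_mul]
  split_ifs with h
  · obtain ⟨β, rfl⟩ : ∃ β, α = β + single i 1 := ⟨α - single i 1, (tsub_add_cancel_of_le h).symm⟩
    rw [add_tsub_cancel_right, one_mul, coeff_eulerQuot, map_add, degree_single]
    simp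
  · have hα : α i = 0 := by simpa [Finsupp.single_le_iff] using h
    simp [hα]

theorem sum_X_mul_eulerQuot [Fintype σ] [CharZero K] {f : MvPowerSeries σ K}
    (hf : constantCoeff f = 0) : ∑ i, X i * eulerQuot i f = f := by
  ext α
  simp_rw [map_sum, coeff_X_mul_eulerQuot, ← Finset.sum_mul, ← Finset.sum_div]
  rcases eq_or_ne α 0 with rfl | hα
  · simp [hf]
  · have hdeg : (α.degree : K) ≠ 0 := by simpa [degree_eq_zero_iff] using hα
    rw [← Nat.cast_sum, ← degree_eq_sum, div_self hdeg, one_mul]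

theorem le_order_eulerQuot (i : σ) {f : MvPowerSeries σ K} {s : ℕ}
    (hf : ((s + 1 : ℕ) : ℕ∞) ≤ f.order) : (s : ℕ∞) ≤ (eulerQuot i f).order := by
  refine nat_le_order fun β hβ => ?_
  have hlt : ((β + single i 1).degree : ℕ∞) < f.order := by
    rw [map_add, degree_single]
    exact lt_of_lt_of_le (by exact_mod_cast Nat.add_lt_add_right hβ 1) hf
  rw [coeff_eulerQuot, coeff_of_lt_order hlt, mul_zero]

theorem mem_span_X_pow_of_le_order [Fintype σ] [CharZero K] {f : MvPowerSeries σ K} {s : ℕ}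
    (hf : (s : ℕ∞) ≤ f.order) : f ∈ Ideal.span (Set.range X) ^ s := by
  induction s generalizing f with
  | zero => simp
  | succ s ih =>
    have hf0 : constantCoeff f = 0 :=
      one_le_order_iff_constCoeff_eq_zero.mp (le_trans (by exact_mod_cast Nat.le_add_left 1 s) hf)
    rw [← sum_X_mul_eulerQuot hf0, pow_succ']
    exact Submodule.sum_mem _ fun i _ =>
      Ideal.mul_mem_mul (Ideal.subset_span ⟨i, rfl⟩) (ih (le_order_eulerQuot i hf))

end Euler

end MvPowerSeries

theorem Ideal.mem_smul_top_pi_iff {R ι : Type*} [CommSemiring R] [Finite ι] (I : Ideal R)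
    (x : ι → R) : x ∈ I • (⊤ : Submodule R (ι → R)) ↔ ∀ i, x i ∈ I := by
  constructor
  · intro hx
    refine Submodule.smul_induction_on hx (fun a ha y _ i => ?_) (fun y z hy hz i => ?_)
    · exact I.mul_mem_right _ ha
    · exact I.add_mem (hy i) (hz i)
  · intro hx
    classical
    have := Fintype.ofFinite ι
    rw [pi_eq_sum_univ x]
    exact Submodule.sum_mem _ fun i _ => Submodule.smul_mem_smul (hx i) trivial

section InitialExponent

variable {n p : ℕ}

theorem degF_eq_degree (α : Fin n →₀ ℕ) : degF α = α.degree := (Finsupp.degree_eq_sum α).symm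

def idxKey (d : Idx n p) : ℕ ×ₗ ℕ ×ₗ Lex (Fin n →₀ ℕ) :=
  toLex (degF d.1, toLex ((d.2 : ℕ), toLex d.1))

theorem idxKey_injective : Function.Injective (idxKey (n := n) (p := p)) := by
  intro a b h
  simp only [idxKey, toLex_inj, Prod.mk.injEq, Fin.val_inj] at h
  exact Prod.ext h.2.2 h.2.1

theorem idxLT_iff_idxKey_lt {a b : Idx n p} : idxLT a b ↔ idxKey a < idxKey b := by
  simp only [idxLT, idxKey, lexLT, Prod.Lex.toLex_lt_toLex, Fin.val_inj]
  rfl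

theorem idxLE_iff_idxKey_le {a b : Idx n p} : idxLE a b ↔ idxKey a ≤ idxKey b := by
  rw [idxLE, le_iff_lt_or_eq, idxLT_iff_idxKey_lt, idxKey_injective.eq_iff]

theorem degF_le_of_idxLE {a b : Idx n p} (h : idxLE a b) : degF a.1 ≤ degF b.1 := by
  rcases h with (h | ⟨h, -⟩) | rfl
  exacts [h.le, h.le, le_rfl]

theorem exists_isExpOf {A : Type} [Semiring A] {F : Fin p → MvPowerSeries (Fin n) A}
    (hF : F ≠ 0) : ∃ d, IsExpOf F d := by
  have : WellFoundedLT (Lex (Fin n →₀ ℕ)) := Finsupp.Lex.wellFoundedLT_of_finite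
  have hsupp : (suppV F).Nonempty := by
    obtain ⟨j, hj⟩ := Function.ne_iff.mp hF
    obtain ⟨α, hα⟩ := (MvPowerSeries.ne_zero_iff_exists_coeff_ne_zero _).mp hj
    exact ⟨(α, j), hα⟩
  obtain ⟨d, hd, hmin⟩ := (InvImage.wf idxKey wellFounded_lt).has_min _ hsupp
  exact ⟨d, hd, fun e he => idxLE_iff_idxKey_le.mpr (not_lt.mp (hmin e he))⟩

end InitialExponent

section Monomials

open MvPowerSeries

variable {R : Type*} [CommSemiring R] {n p : ℕ}

variable (R) in
noncomputable def idxMonomial (d : Idx n p) : Fin p → MvPowerSeries (Fin n) R :=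
  Pi.single d.2 (monomial d.1 1)

variable (R) in
def idxCoeff (e : Idx n p) : (Fin p → MvPowerSeries (Fin n) R) →ₗ[R] R :=
  (coeff e.1).comp (LinearMap.proj e.2)

variable (R n p) in
noncomputable abbrev spanXPowSMulTop (s : ℕ) :
    Submodule (MvPowerSeries (Fin n) R) (Fin p → MvPowerSeries (Fin n) R) :=
  Ideal.span (Set.range (X : Fin n → MvPowerSeries (Fin n) R)) ^ s • ⊤

theorem idxCoeff_apply (e : Idx n p) (G : Fin p → MvPowerSeries (Fin n) R) :
    idxCoeff R e G = coeff e.1 (G e.2) :=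
  rfl

theorem idxCoeff_idxMonomial (e d : Idx n p) :
    idxCoeff R e (idxMonomial R d) = (Pi.single d 1 : Idx n p → R) e := by
  classical
  obtain ⟨α, i⟩ := d
  obtain ⟨β, j⟩ := e
  rcases eq_or_ne j i with rfl | hji
  · simp [idxCoeff_apply, idxMonomial, coeff_monomial, Pi.single_apply]
  · simp [idxCoeff_apply, idxMonomial, hji]

theorem idxCoeff_sum_smul_idxMonomial (s : Finset (Idx n p)) (c : Idx n p → R) (e : Idx n p) :
    idxCoeff R e (∑ d ∈ s, c d • idxMonomial R d) = if e ∈ s then c e else 0 := by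
  classical
  simp [idxCoeff_idxMonomial, Pi.single_apply]

theorem linearIndependent_idxMonomial :
    LinearIndependent R (idxMonomial R : Idx n p → Fin p → MvPowerSeries (Fin n) R) := by
  classical
  refine LinearIndependent.of_comp (LinearMap.pi fun e => idxCoeff R e) ?_
  have : (LinearMap.pi fun e => idxCoeff R e) ∘ idxMonomial R = fun d : Idx n p => Pi.single d 1 :=
    funext fun d => funext fun e => idxCoeff_idxMonomial e d
  rw [this]
  exact Pi.linearIndependent_single_one (Idx n p) R

theorem idxCoeff_eq_zero_of_mem_span {P : Idx n p → Prop} {G : Fin p → MvPowerSeries (Fin n) R}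
    (hG : G ∈ Submodule.span R (Set.range fun d : {d // P d} => idxMonomial R d.1))
    {e : Idx n p} (he : ¬ P e) : idxCoeff R e G = 0 := by
  suffices Submodule.span R _ ≤ LinearMap.ker (idxCoeff R e) from this hG
  refine Submodule.span_le.mpr ?_
  rintro _ ⟨d, rfl⟩
  have hne : e ≠ d.1 := fun h => he (h ▸ d.2)
  rw [SetLike.mem_coe, LinearMap.mem_ker, idxCoeff_idxMonomial, Pi.single_eq_of_ne hne]

theorem idxCoeff_eq_zero_of_mem_spanXPowSMulTop {r : ℕ} {G : Fin p → MvPowerSeries (Fin n) R}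
    (hG : G ∈ spanXPowSMulTop R n p (r + 1))
    {e : Idx n p} (he : degF e.1 ≤ r) : idxCoeff R e G = 0 := by
  have hGe := le_order_of_mem_span_X_pow ((Ideal.mem_smul_top_pi_iff _ G).mp hG e.2)
  refine coeff_of_lt_order (lt_of_lt_of_le ?_ hGe)
  rw [← degF_eq_degree]
  exact_mod_cast Nat.lt_succ_of_le he

end Monomials

section Field

open MvPowerSeries

variable {K : Type} [Field K] {n p : ℕ}

theorem mem_spanXPowSMulTop_of_idxCoeff_eq_zero [CharZero K] {r : ℕ}
    {G : Fin p → MvPowerSeries (Fin n) K} (hG : ∀ e : Idx n p, degF e.1 ≤ r → idxCoeff K e G = 0) :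
    G ∈ spanXPowSMulTop K n p (r + 1) := by
  refine (Ideal.mem_smul_top_pi_iff _ G).mpr fun j =>
    mem_span_X_pow_of_le_order (nat_le_order fun α hα => hG (α, j) ?_)
  rw [degF_eq_degree]
  exact Nat.le_of_lt_succ hα

theorem finite_setOf_degF_le (r : ℕ) : {d : Idx n p | degF d.1 ≤ r}.Finite :=
  ((Finsupp.finite_of_degree_le r).prod Set.finite_univ).subset fun d hd =>
    ⟨(degF_eq_degree d.1).symm.trans_le hd, trivial⟩

theorem mem_of_forall_idxCoeff_ne_zero [CharZero K] {r : ℕ}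
    (W : Submodule K (Fin p → MvPowerSeries (Fin n) K))
    (hW : (spanXPowSMulTop K n p (r + 1)).restrictScalars K ≤ W)
    {G : Fin p → MvPowerSeries (Fin n) K}
    (hG : ∀ e : Idx n p, degF e.1 ≤ r → idxCoeff K e G ≠ 0 → idxMonomial K e ∈ W) : G ∈ W := by
  set low := (finite_setOf_degF_le (n := n) (p := p) r).toFinset
  have htrunc : ∑ e ∈ low, idxCoeff K e G • idxMonomial K e ∈ W := by
    refine Submodule.sum_mem _ fun e he => ?_
    by_cases h : idxCoeff K e G = 0
    · simp [h]
    · exact W.smul_mem _ (hG e (by simpa [low] using he) h)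
  have htail : G - ∑ e ∈ low, idxCoeff K e G • idxMonomial K e ∈ W :=
    hW <| mem_spanXPowSMulTop_of_idxCoeff_eq_zero fun e he => by
      rw [map_sub, idxCoeff_sum_smul_idxMonomial, if_pos (by simpa [low] using he), sub_self]
  simpa using add_mem htail htrunc

theorem idxMonomial_mem_of_isExpOf [CharZero K] {r : ℕ}
    (W : Submodule K (Fin p → MvPowerSeries (Fin n) K))
    (hW : (spanXPowSMulTop K n p (r + 1)).restrictScalars K ≤ W)
    {F : Fin p → MvPowerSeries (Fin n) K} {d : Idx n p} (hFW : F ∈ W) (hF : IsExpOf F d)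
    (hlarger : ∀ e, idxLT d e → degF e.1 ≤ r → idxMonomial K e ∈ W) : idxMonomial K d ∈ W := by
  set c := idxCoeff K d F
  have hc : c ≠ 0 := hF.1
  have hT : F - c • idxMonomial K d ∈ W := by
    refine mem_of_forall_idxCoeff_ne_zero W hW fun e he hTe => hlarger e ?_ he
    have hed : e ≠ d := by
      rintro rfl
      simp [c, idxCoeff_idxMonomial] at hTe
    rw [map_sub, map_smul, idxCoeff_idxMonomial, Pi.single_eq_of_ne hed, smul_zero,
      sub_zero] at hTe
    exact (hF.2 e hTe).resolve_right hed.symm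
  have := W.smul_mem c⁻¹ (W.sub_mem hFW hT)
  rwa [sub_sub_cancel, smul_smul, inv_mul_cancel₀ hc, one_smul] at this

theorem exists_mem_diagramOf_idxCoeff_ne_zero
    {M : Submodule (MvPowerSeries (Fin n) K) (Fin p → MvPowerSeries (Fin n) K)} {r : ℕ}
    {G : Fin p → MvPowerSeries (Fin n) K}
    (hG : G ∈ M ⊔ spanXPowSMulTop K n p (r + 1))
    {e : Idx n p} (he : degF e.1 ≤ r) (hGe : idxCoeff K e G ≠ 0) :
    ∃ d ∈ diagramOf M, degF d.1 ≤ r ∧ idxCoeff K d G ≠ 0 := by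
  obtain ⟨F, hFM, T, hT, rfl⟩ := Submodule.mem_sup.mp hG
  have hlow : ∀ d : Idx n p, degF d.1 ≤ r → idxCoeff K d (F + T) = idxCoeff K d F :=
    fun d hd => by rw [map_add, idxCoeff_eq_zero_of_mem_spanXPowSMulTop hT hd, add_zero]
  rw [hlow e he] at hGe
  have hF0 : F ≠ 0 := by rintro rfl; exact hGe (map_zero _)
  obtain ⟨d, hd⟩ := exists_isExpOf hF0
  have hdr : degF d.1 ≤ r := (degF_le_of_idxLE (hd.2 e hGe)).trans he
  exact ⟨d, ⟨F, hFM, hF0, hd⟩, hdr, (hlow d hdr).symm ▸ hd.1⟩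

theorem disjoint_span_idxMonomial_compl_diagramOf
    (M : Submodule (MvPowerSeries (Fin n) K) (Fin p → MvPowerSeries (Fin n) K)) (r : ℕ) :
    Disjoint
      (Submodule.span K (Set.range fun d : {d : Idx n p // d ∈ (diagramOf M)ᶜ ∧ degF d.1 ≤ r} =>
        idxMonomial K d.1))
      ((M ⊔ spanXPowSMulTop K n p (r + 1)).restrictScalars K) := by
  refine Submodule.disjoint_def.mpr fun G hGS hGH => by_contra fun hG0 => ?_
  have hsupp : ∀ e, idxCoeff K e G ≠ 0 → e ∉ diagramOf M ∧ degF e.1 ≤ r :=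
    fun e he => by_contra fun h => he (idxCoeff_eq_zero_of_mem_span hGS h)
  obtain ⟨e, he, -⟩ := exists_isExpOf hG0
  obtain ⟨d, hdN, -, hd⟩ := exists_mem_diagramOf_idxCoeff_ne_zero hGH (hsupp e he).2 he
  exact (hsupp d hd).1 hdN

theorem eq_top_of_idxMonomial_compl_diagramOf_mem [CharZero K]
    (M : Submodule (MvPowerSeries (Fin n) K) (Fin p → MvPowerSeries (Fin n) K)) (r : ℕ)
    (W : Submodule K (Fin p → MvPowerSeries (Fin n) K)) (hM : M.restrictScalars K ≤ W)
    (hW : (spanXPowSMulTop K n p (r + 1)).restrictScalars K ≤ W)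
    (hΔ : ∀ d ∉ diagramOf M, degF d.1 ≤ r → idxMonomial K d ∈ W) : W = ⊤ := by
  suffices h : ∀ d : Idx n p, degF d.1 ≤ r → idxMonomial K d ∈ W from
    Submodule.eq_top_iff'.mpr fun G => mem_of_forall_idxCoeff_ne_zero W hW fun e he _ => h e he
  by_contra! hbad
  obtain ⟨d, ⟨hdr, hdW⟩, hmax⟩ :=
    Set.exists_max_image {d : Idx n p | degF d.1 ≤ r ∧ idxMonomial K d ∉ W} idxKey
      ((finite_setOf_degF_le r).subset fun d hd => hd.1) hbad
  obtain ⟨F, hFM, -, hF⟩ : d ∈ diagramOf M := by_contra fun h => hdW (hΔ d h hdr)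
  refine hdW (idxMonomial_mem_of_isExpOf W hW (hM hFM) hF fun e hde her => ?_)
  by_contra heW
  exact (hmax e ⟨her, heW⟩).not_gt (idxLT_iff_idxKey_lt.mp hde)

theorem codisjoint_span_idxMonomial_compl_diagramOf [CharZero K]
    (M : Submodule (MvPowerSeries (Fin n) K) (Fin p → MvPowerSeries (Fin n) K)) (r : ℕ) :
    Codisjoint
      (Submodule.span K (Set.range fun d : {d : Idx n p // d ∈ (diagramOf M)ᶜ ∧ degF d.1 ≤ r} =>
        idxMonomial K d.1))
      ((M ⊔ spanXPowSMulTop K n p (r + 1)).restrictScalars K) :=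
  codisjoint_iff.mpr <| eq_top_of_idxMonomial_compl_diagramOf_mem M r _
    (le_sup_of_le_right (Submodule.restrictScalars_mono K le_sup_left))
    (le_sup_of_le_right (Submodule.restrictScalars_mono K le_sup_right))
    fun d hd hdr => Submodule.mem_sup_left (Submodule.subset_span ⟨⟨d, hd, hdr⟩, rfl⟩)

end Field

/-- Let `M` be a submodule of `ℝ⟦x₁,…,xₙ⟧ᵖ` and `r ∈ ℕ`. The monomials
`x^{(β,i)}` with `(β,i)` in the complement `Δ` of `𝒩(M)` and `|β| ≤ r` form a basis of an
`ℝ`-linear complement of `M + (x)^{r+1}ℝ⟦x⟧ᵖ` in `ℝ⟦x⟧ᵖ`. -/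
theorem stmt6 {n p : ℕ}
    (M : Submodule (MvPowerSeries (Fin n) ℝ) (Fin p → MvPowerSeries (Fin n) ℝ)) (r : ℕ) :
    LinearIndependent ℝ
      (fun d : {d : Idx n p // d ∈ (diagramOf M)ᶜ ∧ degF d.1 ≤ r} =>
        (Pi.single d.1.2 (MvPowerSeries.monomial (R := ℝ) d.1.1 1) :
          Fin p → MvPowerSeries (Fin n) ℝ)) ∧
    IsCompl
      (Submodule.span ℝ
        (Set.range fun d : {d : Idx n p // d ∈ (diagramOf M)ᶜ ∧ degF d.1 ≤ r} =>
          (Pi.single d.1.2 (MvPowerSeries.monomial (R := ℝ) d.1.1 1) :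
            Fin p → MvPowerSeries (Fin n) ℝ)))
      (Submodule.restrictScalars ℝ
        (M ⊔ ((Ideal.span (Set.range (MvPowerSeries.X : Fin n → MvPowerSeries (Fin n) ℝ)))
            ^ (r + 1) •
          (⊤ : Submodule (MvPowerSeries (Fin n) ℝ) (Fin p → MvPowerSeries (Fin n) ℝ))))) :=
  ⟨linearIndependent_idxMonomial.comp _ Subtype.val_injective,
    disjoint_span_idxMonomial_compl_diagramOf M r, codisjoint_span_idxMonomial_compl_diagramOf M r⟩
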